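/- Let ρ be a density operator and O a traceless Hermitian operator on the n-qubit Hilbert space. Then |Ξ̃_{ρ,O}·Ξ_{ρ,O}| ≤ ‖Ξ̃_{ρ,O}‖₂² = ‖Ξ_{ρ,O}‖₂² ≤ ‖Ξ_O²‖_{[d]} ≤ ‖Ξ_O‖₂² = d‖O‖₂². -/

import Mathlib

open MeasureTheory Matrix
open scoped BigOperators ENNReal Real ComplexConjugate ComplexOrder

noncomputable section

namespace ThriftyShadow

/-- basis index set of the `n`-qubit Hilbert space -/
abbrev Idx (n : ℕ) := Fin n → Fin 2

/-- linear operators on the `n`-qubit Hilbert space -/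
abbrev Op (n : ℕ) := Matrix (Idx n) (Idx n) ℂ

/-- index set for the `t`-th tensor power -/
abbrev TIdx (n t : ℕ) := Fin t → Idx n

/-- operators on the `t`-th tensor power -/
abbrev TMat (n t : ℕ) := Matrix (TIdx n t) (TIdx n t) ℂ

/-- the dimension `d = 2^n`, as a real number -/
def dim (n : ℕ) : ℝ := 2 ^ n

/-- tensor product of a family of operators: `(⨂ i, f i) (x,y) = ∏ i, (f i) (x i) (y i)` -/
def tpow {n t : ℕ} (f : Fin t → Op n) : TMat n t :=
  Matrix.of fun x y => ∏ i, f i (x i) (y i)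

/-- the projector `|b⟩⟨b|` onto a computational basis state -/
def ket (n : ℕ) (b : Idx n) : Op n := Matrix.single b b 1

/-- `|φ⟩⟨φ|` for a vector `φ` -/
def ketbra {n : ℕ} (φ : Idx n → ℂ) : Op n := Matrix.vecMulVec φ (star φ)

/-- a density operator: positive semidefinite with unit trace -/
def IsDensity {n : ℕ} (ρ : Op n) : Prop := ρ.PosSemidef ∧ ρ.trace = 1

/-- squared Hilbert–Schmidt norm `tr(O²)` of a Hermitian operator -/
def hsNormSq {n : ℕ} (O : Op n) : ℝ := ((O * O).trace).re

/-- purity `tr(ρ²)` -/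
def purity {n : ℕ} (ρ : Op n) : ℝ := ((ρ * ρ).trace).re

/-- fidelity `⟨φ|ρ|φ⟩` -/
def fid {n : ℕ} (ρ : Op n) (φ : Idx n → ℂ) : ℝ := (star φ ⬝ᵥ ρ.mulVec φ).re

/-- the unitary group `U(d)` on the `n`-qubit Hilbert space -/
abbrev UG (n : ℕ) := Matrix.unitaryGroup (Idx n) ℂ

instance (n : ℕ) : MeasurableSpace (UG n) := borel _

/-- entries of the `t`-fold twirl `E_{U∼μ}[U^{⊗t} A (U†)^{⊗t}]` -/
def twirlEntry {n t : ℕ} (μ : Measure (UG n)) (A : TMat n t) (i j : TIdx n t) : ℂ :=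
  ∫ U : UG n,
    (((tpow fun _ => (U : Op n)) * A * (tpow fun _ => (U : Op n)ᴴ) : TMat n t)) i j ∂μ

/-- `ν` is the Haar probability measure on `U(d)`: the (unique) left-invariant
Borel probability measure -/
def IsHaar {n : ℕ} (ν : Measure (UG n)) : Prop :=
  IsProbabilityMeasure ν ∧ ∀ V : UG n, Measure.map (fun U => V * U) ν = ν

/-- `μ` is a unitary `t`-design: its `t`-fold twirl agrees with that of the
Haar measure `ν` -/
def IsTDesign {n : ℕ} (t : ℕ) (μ ν : Measure (UG n)) : Prop :=
  ∀ A : TMat n t, ∀ i j, twirlEntry μ A i j = twirlEntry ν A i j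

/-- the single-shot shadow-estimation variance `V(O,ρ)` of a unitary 2-design `μ` -/
def Vshadow {n : ℕ} (μ : Measure (UG n)) (O ρ : Op n) : ℝ :=
  ((∫ U : UG n, ∑ b : Idx n, (((dim n + 1 : ℝ) : ℂ))^2 *
      ((tpow fun _ : Fin 3 => (U : Op n)ᴴ * ket n b * (U : Op n)) * tpow ![ρ, O, O]).trace ∂μ)
    - ((O * ρ).trace)^2).re

/-- the cross moment operator `Ω` of a unitary ensemble given by a measure `ω` on a
parameter space together with a (unitary-valued) map `f` into operators -/
def Omega {n : ℕ} {α : Type*} [MeasurableSpace α] (ω : Measure α) (f : α → Op n) : TMat n 4 :=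
  Matrix.of fun i j =>
    ∑ a : Idx n, ∑ b : Idx n,
      ∫ x, (((tpow fun _ => (f x)ᴴ) * (tpow ![ket n a, ket n a, ket n b, ket n b])
              * (tpow fun _ => f x) : TMat n 4)) i j ∂ω

/-- the reuse variance `V*(O,ρ)` of the unitary ensemble `(ω, f)` -/
def Vstar {n : ℕ} {α : Type*} [MeasurableSpace α] (ω : Measure α) (f : α → Op n)
    (O ρ : Op n) : ℝ :=
  ((((dim n + 1 : ℝ) : ℂ))^2 * (Omega ω f * tpow ![O, ρ, O, ρ]).trace
    - ((O * ρ).trace)^2).re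

/-- `V*(O,ρ)` for an ensemble which is simply a measure on the unitary group -/
def VstarU {n : ℕ} (μ : Measure (UG n)) (O ρ : Op n) : ℝ :=
  Vstar μ (fun U => (U : Op n)) O ρ

/-- `V*(O) = sup_ρ V*(O,ρ)`, supremum over density operators -/
def VstarSup {n : ℕ} {α : Type*} [MeasurableSpace α] (ω : Measure α) (f : α → Op n)
    (O : Op n) : ℝ :=
  sSup {v | ∃ ρ : Op n, IsDensity ρ ∧ v = Vstar ω f O ρ}

/-- the single-qubit Pauli matrices `I, X, Y, Z` -/
def pauli1 : Fin 4 → Matrix (Fin 2) (Fin 2) ℂ :=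
  ![1, !![0, 1; 1, 0], !![0, -Complex.I; Complex.I, 0], !![1, 0; 0, -1]]

/-- index set for `n`-qubit Pauli operators -/
abbrev PIdx (n : ℕ) := Fin n → Fin 4

/-- the `n`-qubit Pauli operator labelled by `p` -/
def pauliOp (n : ℕ) (p : PIdx n) : Op n :=
  Matrix.of fun x y => ∏ i, pauli1 (p i) (x i) (y i)

/-- the `n`-qubit Pauli group (Pauli operators with phases `i^k`) -/
def pauliGroup (n : ℕ) : Set (Op n) :=
  {A | ∃ (k : Fin 4) (p : PIdx n), A = Complex.I ^ (k : ℕ) • pauliOp n p}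

/-- the Clifford group, as the set of unitaries normalizing the Pauli group -/
def cliffordSet (n : ℕ) : Set (UG n) :=
  {U | (fun A => (U : Op n) * A * (U : Op n)ᴴ) '' pauliGroup n = pauliGroup n}

/-- `μ` is the Haar probability measure of the Clifford group, viewed as a measure on
`U(d)`: it is supported on the Clifford group and left-invariant under it -/
def IsCliffordHaar {n : ℕ} (μ : Measure (UG n)) : Prop :=
  μ (cliffordSet n) = 1 ∧ ∀ C ∈ cliffordSet n, Measure.map (fun U => C * U) μ = μ

/-- characteristic function `Ξ_A(P) = tr(A P)` (real part) -/
def XiC {n : ℕ} (A : Op n) (p : PIdx n) : ℝ := ((A * pauliOp n p).trace).re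

/-- cross characteristic function `Ξ_{ρ,O}(P) = tr(ρP) tr(OP)` -/
def crossXi {n : ℕ} (ρ O : Op n) (p : PIdx n) : ℝ := XiC ρ p * XiC O p

/-- twisted cross characteristic function `Ξ̃_{ρ,O}(P) = tr(ρ P O P)` -/
def twistXi {n : ℕ} (ρ O : Op n) (p : PIdx n) : ℝ :=
  ((ρ * pauliOp n p * O * pauliOp n p).trace).re

/-- the quantity `V_△(O,ρ)` -/
def Vtri {n : ℕ} (O ρ : Op n) : ℝ :=
  (dim n + 1) / (dim n * (dim n + 2)) *
    ((∑ p : PIdx n, (crossXi ρ O p)^2) + ∑ p : PIdx n, twistXi ρ O p * crossXi ρ O p)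

/-- `V_△(O) = sup_ρ V_△(O,ρ)` over density operators -/
def VtriSup {n : ℕ} (O : Op n) : ℝ :=
  sSup {v | ∃ ρ : Op n, IsDensity ρ ∧ v = Vtri O ρ}

/-- the sum of the `d` largest entries of a vector indexed by Pauli labels -/
def topdSum {n : ℕ} (g : PIdx n → ℝ) : ℝ :=
  sSup {x | ∃ S : Finset (PIdx n), S.card = 2 ^ n ∧ x = ∑ p ∈ S, g p}

/-- Pauli expectation value `⟨φ|P|φ⟩` of a pure state -/
def pExp {n : ℕ} (φ : Idx n → ℂ) (p : PIdx n) : ℝ :=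
  (star φ ⬝ᵥ (pauliOp n p).mulVec φ).re

/-- stabilizer 2-Rényi entropy `M₂(φ)` of a pure state -/
def M2 {n : ℕ} (φ : Idx n → ℂ) : ℝ :=
  - Real.logb 2 ((dim n)⁻¹ * ∑ p : PIdx n, (pExp φ p)^4)

/-- stabilizer 2-Rényi entropy `M̃₂(ρ)` of a (mixed) state -/
def M2mixed {n : ℕ} (ρ : Op n) : ℝ :=
  - Real.logb 2 ((∑ p : PIdx n, (XiC ρ p)^4) / (dim n * purity ρ))

/-- the T gate -/
def Tgate : Matrix (Fin 2) (Fin 2) ℂ :=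
  !![1, 0; 0, Complex.exp (Complex.I * (Real.pi / 4))]

/-- the Hadamard gate -/
def Hgate : Matrix (Fin 2) (Fin 2) ℂ :=
  ((Real.sqrt 2 : ℂ))⁻¹ • !![1, 1; 1, -1]

/-- a single-qubit gate `A` applied in parallel to the last `k` qubits -/
def layer (n k : ℕ) (A : Matrix (Fin 2) (Fin 2) ℂ) : Op n :=
  Matrix.of fun x y =>
    ∏ i : Fin n, (if (i : ℕ) < n - k then (1 : Matrix (Fin 2) (Fin 2) ℂ) else A) (x i) (y i)

/-- the interleaved Clifford–T circuit `U_l T̂_k U_{l-1} T̂_k ⋯ T̂_k U_0` -/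
def circuit (n k : ℕ) : (l : ℕ) → (Fin (l + 1) → UG n) → Op n
  | 0 => fun Us => (Us 0 : Op n)
  | (l + 1) => fun Us =>
      (Us (Fin.last (l + 1)) : Op n) * layer n k Tgate * circuit n k l (fun i => Us i.castSucc)

/-- the computational basis state `|0…0⟩` as a vector -/
def e0 (n : ℕ) : Idx n → ℂ := fun b => if b = (fun _ => (0 : Fin 2)) then 1 else 0

end ThriftyShadow

open ThriftyShadow

/-!
Rescaled by `1 / √d`, the Pauli operators form an orthonormal basis of the operators, which gives
the Parseval identity `∑_P tr(AP) tr(BP) = d tr(AB)` and hence `‖Ξ_O‖₂² = d ‖O‖₂²`. Expanding `O` in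
this basis, `P O P = d⁻¹ ∑_Q ±tr(OQ) Q`, the sign recording whether `P` and `Q` commute; so
`d Ξ̃_{ρ,O}` is the image of `Ξ_{ρ,O}` under the sign matrix. That matrix is the `n`-th tensor power
of a symmetric `4 × 4` matrix with square `4`, i.e. `d` times an orthogonal matrix, whence
`‖Ξ̃_{ρ,O}‖₂ = ‖Ξ_{ρ,O}‖₂`, and Cauchy–Schwarz gives the first inequality.
Finally `‖Ξ_{ρ,O}‖₂² = ∑_P w_P Ξ_O(P)²` with weights `w_P = tr(ρP)² ∈ [0, 1]` (as `-1 ≤ P ≤ 1`)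
summing to `d tr(ρ²) ≤ d`, and such a weighted sum is at most the sum of the `d` largest terms.
-/

namespace Matrix

variable {ι κ m R : Type*} [Fintype ι] [Fintype κ] [CommSemiring R]

def piTensor (F : κ → Matrix m m R) : Matrix (κ → m) (κ → m) R :=
  of fun x y => ∏ i, F i (x i) (y i)

@[simp]
lemma piTensor_apply (F : κ → Matrix m m R) (x y : κ → m) :
    piTensor F x y = ∏ i, F i (x i) (y i) := rfl

lemma piTensor_mul [DecidableEq κ] [Fintype m] (F G : κ → Matrix m m R) :
    piTensor F * piTensor G = piTensor (F * G) := by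
  ext x y
  simp only [mul_apply, piTensor_apply, Pi.mul_apply, ← Finset.prod_mul_distrib,
    Fintype.prod_sum]

lemma piTensor_one [DecidableEq m] : piTensor (fun _ : κ => (1 : Matrix m m R)) = 1 := by
  ext x y
  by_cases h : x = y
  · subst h; simp
  · obtain ⟨i, hi⟩ := Function.ne_iff.mp h
    rw [one_apply_ne h]
    exact Finset.prod_eq_zero (Finset.mem_univ i) (one_apply_ne hi)

lemma piTensor_smul (c : κ → R) (F : κ → Matrix m m R) :
    piTensor (fun i => c i • F i) = (∏ i, c i) • piTensor F := by
  ext x y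
  simp [Finset.prod_mul_distrib]

lemma piTensor_transpose (F : κ → Matrix m m R) :
    (piTensor F)ᵀ = piTensor fun i => (F i)ᵀ := rfl

lemma piTensor_conjTranspose [StarRing R] (F : κ → Matrix m m R) :
    (piTensor F)ᴴ = piTensor fun i => (F i)ᴴ := by
  ext x y
  simp [conjTranspose_apply, star_prod]

lemma PosSemidef.re_trace_mul_nonneg_of_isIdempotentElem {ρ Q : Matrix ι ι ℂ}
    (hρ : ρ.PosSemidef) (hQ : Q.IsHermitian) (hQQ : IsIdempotentElem Q) :
    0 ≤ (ρ * Q).trace.re := by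
  have h : (ρ * Q).trace = (Qᴴ * ρ * Q).trace := by
    rw [hQ.eq, Matrix.mul_assoc Q, trace_mul_comm Q, Matrix.mul_assoc, hQQ.eq]
  rw [h]
  exact (Complex.nonneg_iff.mp (hρ.conjTranspose_mul_mul_same Q).trace_nonneg).1

lemma PosSemidef.abs_re_trace_mul_le [DecidableEq ι] {ρ P : Matrix ι ι ℂ} (hρ : ρ.PosSemidef)
    (hP : P.IsHermitian) (hPP : P * P = 1) : |(ρ * P).trace.re| ≤ ρ.trace.re := by
  have key : ∀ s : ℝ, s * s = 1 → 0 ≤ ρ.trace.re + s * (ρ * P).trace.re := fun s hs => by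
    have hQ : ((1 / 2 : ℝ) • (1 + s • P)).IsHermitian := by
      simp [IsHermitian, conjTranspose_smul, conjTranspose_add, hP.eq]
    have hQQ : IsIdempotentElem ((1 / 2 : ℝ) • (1 + s • P)) := by
      rw [IsIdempotentElem]
      simp only [smul_mul_smul_comm, add_mul, mul_add, Matrix.one_mul, Matrix.mul_one,
        Matrix.mul_smul, hPP, hs]
      module
    have := hρ.re_trace_mul_nonneg_of_isIdempotentElem hQ hQQ
    simp only [Matrix.mul_smul, Matrix.mul_add, Matrix.mul_one, trace_smul, trace_add,
      Complex.smul_re, Complex.add_re, smul_eq_mul] at this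
    linarith
  exact abs_le.mpr ⟨by linarith [key 1 (by norm_num)], by linarith [key (-1) (by norm_num)]⟩

lemma PosSemidef.re_trace_mul_self_le [DecidableEq ι] {ρ : Matrix ι ι ℂ} (hρ : ρ.PosSemidef) :
    (ρ * ρ).trace.re ≤ ρ.trace.re ^ 2 := by
  have hsq : (ρ * ρ).trace = ∑ i, ((hρ.1.eigenvalues i ^ 2 : ℝ) : ℂ) := by
    conv_lhs => rw [hρ.1.spectral_theorem, ← map_mul, Unitary.conjStarAlgAut_apply,
      trace_mul_cycle, Unitary.coe_star_mul_self, Matrix.one_mul, diagonal_mul_diagonal,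
      trace_diagonal]
    simp [sq]
  rw [hsq, hρ.1.trace_eq_sum_eigenvalues]
  simp only [Complex.re_sum, Complex.ofReal_re]
  exact Finset.sum_sq_le_sq_sum_of_nonneg fun i _ => hρ.eigenvalues_nonneg i

lemma dotProduct_mulVec_self_of_transpose_mul_self [DecidableEq ι] {M : Matrix ι ι R} {k : R}
    (hM : Mᵀ * M = k • 1) (v : ι → R) : (M *ᵥ v) ⬝ᵥ (M *ᵥ v) = k * (v ⬝ᵥ v) := by
  rw [dotProduct_mulVec, ← transpose_transpose M, vecMul_transpose, transpose_transpose,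
    mulVec_mulVec, hM, smul_mulVec, one_mulVec, smul_dotProduct, smul_eq_mul]

end Matrix

section TopSum

variable {ι : Type*} [Fintype ι] [DecidableEq ι]

lemma exists_finset_card_eq_forall_le {α : Type*} [LinearOrder α] (a : ι → α) {k : ℕ}
    (hk : k ≤ Fintype.card ι) : ∃ S : Finset ι, S.card = k ∧ ∀ x ∈ S, ∀ y ∉ S, a y ≤ a x := by
  induction k with
  | zero => exact ⟨∅, rfl, by simp⟩
  | succ k ih =>
    obtain ⟨S, hcard, hS⟩ := ih (Nat.le_of_succ_le hk)
    have hne : Sᶜ.Nonempty := by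
      rw [← Finset.card_pos, Finset.card_compl, hcard]; omega
    obtain ⟨z, hzS, hz⟩ := Finset.exists_max_image Sᶜ a hne
    rw [Finset.mem_compl] at hzS
    refine ⟨insert z S, by rw [Finset.card_insert_of_notMem hzS, hcard], ?_⟩
    intro x hx y hy
    rw [Finset.mem_insert, not_or] at hy
    rcases Finset.mem_insert.mp hx with rfl | hx
    · exact hz y (Finset.mem_compl.mpr hy.2)
    · exact hS x hx y hy.2

lemma sum_mul_le_sum_of_threshold {S : Finset ι} {w a : ι → ℝ} {m : ℝ} (hm : 0 ≤ m)
    (hS : ∀ x ∈ S, m ≤ a x) (hSc : ∀ y ∉ S, a y ≤ m) (hw0 : ∀ i, 0 ≤ w i)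
    (hw1 : ∀ i, w i ≤ 1) (hw : ∑ i, w i ≤ S.card) : ∑ i, w i * a i ≤ ∑ i ∈ S, a i := by
  have hpt : ∀ i, w i * (a i - m) ≤ if i ∈ S then a i - m else 0 := fun i => by
    split_ifs with hi
    · nlinarith [hS i hi, hw1 i]
    · nlinarith [hSc i hi, hw0 i]
  calc ∑ i, w i * a i = ∑ i, w i * (a i - m) + m * ∑ i, w i := by
        rw [Finset.mul_sum, ← Finset.sum_add_distrib]; ring_nf
    _ ≤ ∑ i, (if i ∈ S then a i - m else 0) + m * S.card :=
        add_le_add (Finset.sum_le_sum fun i _ => hpt i) (mul_le_mul_of_nonneg_left hw hm)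
    _ = ∑ i ∈ S, a i := by
        rw [Finset.sum_ite_mem, Finset.univ_inter, Finset.sum_sub_distrib, Finset.sum_const,
          nsmul_eq_mul]
        ring

lemma exists_card_eq_sum_mul_le_sum {w a : ι → ℝ} {k : ℕ} (hk0 : 0 < k)
    (hk : k ≤ Fintype.card ι) (hw0 : ∀ i, 0 ≤ w i) (hw1 : ∀ i, w i ≤ 1) (hw : ∑ i, w i ≤ k)
    (ha : ∀ i, 0 ≤ a i) : ∃ S : Finset ι, S.card = k ∧ ∑ i, w i * a i ≤ ∑ i ∈ S, a i := by
  obtain ⟨S, hcard, hS⟩ := exists_finset_card_eq_forall_le a hk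
  obtain ⟨x, hxS, hx⟩ := Finset.exists_min_image S a (Finset.card_pos.mp (hcard ▸ hk0))
  exact ⟨S, hcard, sum_mul_le_sum_of_threshold (ha x) hx (fun y hy => hS x hxS y hy) hw0 hw1
    (hcard ▸ hw)⟩

end TopSum

namespace ThriftyShadow

open Matrix

lemma pauli1_mul_self (a : Fin 4) : pauli1 a * pauli1 a = 1 := by
  fin_cases a <;> ext i j <;> fin_cases i <;> fin_cases j <;>
    simp [pauli1, mul_apply, Fin.sum_univ_two, one_apply]

lemma pauli1_conjTranspose (a : Fin 4) : (pauli1 a)ᴴ = pauli1 a := by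
  fin_cases a <;> ext i j <;> fin_cases i <;> fin_cases j <;>
    simp [pauli1, conjTranspose_apply, one_apply]

/-- Single-qubit Paulis commute (sign `1`) or anticommute (sign `-1`). -/
def pauliSign : Matrix (Fin 4) (Fin 4) ℝ :=
  of fun a b => if a = 0 ∨ b = 0 ∨ a = b then 1 else -1

lemma pauli1_mul_mul_self (a b : Fin 4) :
    pauli1 a * pauli1 b * pauli1 a = (pauliSign a b : ℂ) • pauli1 b := by
  fin_cases a <;> fin_cases b <;> ext i j <;> fin_cases i <;> fin_cases j <;>
    simp [pauli1, pauliSign, mul_apply, Fin.sum_univ_two, one_apply]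

lemma pauliSign_transpose : pauliSignᵀ = pauliSign := by
  ext a b; fin_cases a <;> fin_cases b <;> simp [pauliSign]

lemma pauliSign_mul_self : pauliSign * pauliSign = (4 : ℝ) • 1 := by
  ext a b; fin_cases a <;> fin_cases b <;>
    simp [pauliSign, mul_apply, Fin.sum_univ_four, one_apply] <;> norm_num

lemma sum_pauli1_mul_pauli1 (i j k l : Fin 2) :
    ∑ a, pauli1 a i j * pauli1 a k l =
      2 * ((1 : Matrix (Fin 2) (Fin 2) ℂ) i l * (1 : Matrix (Fin 2) (Fin 2) ℂ) j k) := by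
  fin_cases i <;> fin_cases j <;> fin_cases k <;> fin_cases l <;>
    simp [pauli1, Fin.sum_univ_four, one_apply] <;> norm_num

variable {n : ℕ}

lemma pauliOp_eq_piTensor (p : PIdx n) : pauliOp n p = piTensor fun i => pauli1 (p i) := rfl

lemma pauliOp_mul_self (p : PIdx n) : pauliOp n p * pauliOp n p = 1 := by
  rw [pauliOp_eq_piTensor, piTensor_mul, ← piTensor_one]
  exact congrArg piTensor (funext fun i => pauli1_mul_self (p i))

lemma pauliOp_isHermitian (p : PIdx n) : (pauliOp n p).IsHermitian := by
  rw [IsHermitian, pauliOp_eq_piTensor, piTensor_conjTranspose]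
  exact congrArg piTensor (funext fun i => pauli1_conjTranspose (p i))

def pauliCommSign (n : ℕ) : Matrix (PIdx n) (PIdx n) ℝ := piTensor fun _ => pauliSign

lemma pauliOp_mul_mul_self (p q : PIdx n) :
    pauliOp n p * pauliOp n q * pauliOp n p = (pauliCommSign n p q : ℂ) • pauliOp n q := by
  simp only [pauliOp_eq_piTensor, piTensor_mul]
  rw [show ((fun i => pauli1 (p i)) * (fun i => pauli1 (q i)) * fun i => pauli1 (p i)) =
      fun i => (pauliSign (p i) (q i) : ℂ) • pauli1 (q i) from
    funext fun i => pauli1_mul_mul_self (p i) (q i), piTensor_smul]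
  simp [pauliCommSign]

lemma pauliCommSign_transpose : (pauliCommSign n)ᵀ = pauliCommSign n := by
  rw [pauliCommSign, piTensor_transpose, pauliSign_transpose]

lemma pauliCommSign_mul_self : pauliCommSign n * pauliCommSign n = (4 ^ n : ℝ) • 1 := by
  rw [pauliCommSign, piTensor_mul, show ((fun _ : Fin n => pauliSign) * fun _ => pauliSign) = fun _ => (4 : ℝ) • 1 from
    funext fun _ => pauliSign_mul_self, piTensor_smul, piTensor_one]
  simp

lemma sum_pauliOp_mul_pauliOp (x y z w : Idx n) :
    ∑ p : PIdx n, pauliOp n p x y * pauliOp n p z w =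
      2 ^ n * ((1 : Op n) x w * (1 : Op n) y z) := by
  simp only [pauliOp_eq_piTensor, piTensor_apply, ← Finset.prod_mul_distrib]
  rw [← Fintype.prod_sum fun i a => pauli1 a (x i) (y i) * pauli1 a (z i) (w i)]
  simp only [sum_pauli1_mul_pauli1, Finset.prod_mul_distrib, ← piTensor_one, piTensor_apply]
  simp

lemma sum_trace_mul_pauliOp_smul (A : Op n) :
    ∑ q : PIdx n, (A * pauliOp n q).trace • pauliOp n q = (2 ^ n : ℂ) • A := by
  ext x y
  simp only [Matrix.sum_apply, Matrix.smul_apply, smul_eq_mul, trace, diag, mul_apply,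
    Finset.sum_mul]
  calc _ = ∑ k, ∑ l, A k l * ∑ q : PIdx n, pauliOp n q l k * pauliOp n q x y := by
        rw [Finset.sum_comm]
        refine Finset.sum_congr rfl fun k _ => ?_
        rw [Finset.sum_comm]
        simp only [Finset.mul_sum, mul_assoc]
    _ = 2 ^ n * A x y := by simp [sum_pauliOp_mul_pauliOp, one_apply, mul_comm]

lemma sum_trace_mul_pauliOp_mul_trace (A B : Op n) :
    ∑ p : PIdx n, (A * pauliOp n p).trace * (B * pauliOp n p).trace
      = 2 ^ n * (A * B).trace := by
  have h := congrArg (fun M => (B * M).trace) (sum_trace_mul_pauliOp_smul A)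
  simp only [Matrix.mul_sum, trace_sum, Matrix.mul_smul, trace_smul, smul_eq_mul] at h
  rw [trace_mul_comm B A] at h
  simpa only [mul_comm] using h

lemma trace_mul_pauliOp_of_isHermitian {A : Op n} (hA : A.IsHermitian) (p : PIdx n) :
    (A * pauliOp n p).trace = (XiC A p : ℂ) := by
  refine (Complex.conj_eq_iff_re.mp ?_).symm
  change star _ = _
  rw [← trace_conjTranspose, conjTranspose_mul, (pauliOp_isHermitian p).eq, hA.eq,
    trace_mul_comm]

lemma sum_XiC_sq {A : Op n} (hA : A.IsHermitian) :
    ∑ p : PIdx n, XiC A p ^ 2 = dim n * hsNormSq A := by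
  have h := congrArg Complex.re (sum_trace_mul_pauliOp_mul_trace A A)
  simp only [trace_mul_pauliOp_of_isHermitian hA, ← Complex.ofReal_mul, ← Complex.ofReal_sum,
    Complex.ofReal_re] at h
  rw [show (2 : ℂ) ^ n = ((2 ^ n : ℝ) : ℂ) by push_cast; rfl, Complex.re_ofReal_mul] at h
  simpa [sq, dim, hsNormSq] using h

lemma two_pow_smul_twistXi {ρ O : Op n} (hρ : ρ.IsHermitian) (hO : O.IsHermitian) :
    (2 ^ n : ℝ) • twistXi ρ O = pauliCommSign n *ᵥ crossXi ρ O := by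
  funext p
  have h : (2 ^ n : ℂ) * (ρ * pauliOp n p * O * pauliOp n p).trace
      = ∑ q, (O * pauliOp n q).trace * (pauliCommSign n p q : ℂ) * (ρ * pauliOp n q).trace := by
    calc (2 ^ n : ℂ) * (ρ * pauliOp n p * O * pauliOp n p).trace
        = (ρ * (pauliOp n p * ((2 ^ n : ℂ) • O) * pauliOp n p)).trace := by
          simp only [Matrix.mul_smul, Matrix.smul_mul, trace_smul, smul_eq_mul, Matrix.mul_assoc]
      _ = _ := by
          simp only [← sum_trace_mul_pauliOp_smul O, Matrix.mul_sum, Matrix.sum_mul, trace_sum,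
            Matrix.mul_smul, Matrix.smul_mul, pauliOp_mul_mul_self, trace_smul, smul_eq_mul]
          simp only [mul_assoc]
  simp only [trace_mul_pauliOp_of_isHermitian hρ, trace_mul_pauliOp_of_isHermitian hO] at h
  rw [show (2 : ℂ) ^ n = ((2 ^ n : ℝ) : ℂ) by push_cast; rfl] at h
  have := congrArg Complex.re h
  simp only [Complex.re_ofReal_mul] at this
  simpa [twistXi, crossXi, mulVec, dotProduct, mul_comm, mul_assoc] using this

lemma sum_twistXi_sq {ρ O : Op n} (hρ : ρ.IsHermitian) (hO : O.IsHermitian) :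
    ∑ p : PIdx n, twistXi ρ O p ^ 2 = ∑ p : PIdx n, crossXi ρ O p ^ 2 := by
  have h := dotProduct_mulVec_self_of_transpose_mul_self
    (by rw [pauliCommSign_transpose]; exact pauliCommSign_mul_self) (crossXi ρ O)
  rw [← two_pow_smul_twistXi hρ hO, smul_dotProduct, dotProduct_smul, smul_eq_mul, smul_eq_mul,
    ← mul_assoc, show (4 : ℝ) ^ n = 2 ^ n * 2 ^ n by rw [← mul_pow]; norm_num] at h
  simpa [dotProduct, sq] using mul_left_cancel₀ (by positivity) h

lemma XiC_sq_le_one {ρ : Op n} (hρ : IsDensity ρ) (p : PIdx n) : XiC ρ p ^ 2 ≤ 1 := by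
  have h := PosSemidef.abs_re_trace_mul_le hρ.1 (pauliOp_isHermitian p) (pauliOp_mul_self p)
  rw [hρ.2, Complex.one_re] at h
  exact (sq_le_one_iff_abs_le_one _).mpr h

lemma sum_XiC_sq_le_dim {ρ : Op n} (hρ : IsDensity ρ) : ∑ p : PIdx n, XiC ρ p ^ 2 ≤ dim n := by
  have h := PosSemidef.re_trace_mul_self_le hρ.1
  rw [hρ.2, Complex.one_re, one_pow] at h
  rw [sum_XiC_sq hρ.1.1]
  exact mul_le_of_le_one_right (by rw [dim]; positivity) h

lemma two_pow_le_card_pIdx : 2 ^ n ≤ Fintype.card (PIdx n) := by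
  simpa using Nat.pow_le_pow_left (show 2 ≤ 4 by norm_num) n

lemma le_topdSum (g : PIdx n → ℝ) {S : Finset (PIdx n)} (hS : S.card = 2 ^ n) :
    ∑ p ∈ S, g p ≤ topdSum g :=
  le_csSup ((Set.finite_range fun T : Finset (PIdx n) => ∑ p ∈ T, g p).bddAbove.mono
    (by rintro _ ⟨T, -, rfl⟩; exact ⟨T, rfl⟩)) ⟨S, hS, rfl⟩

lemma topdSum_le_sum {g : PIdx n → ℝ} (hg : ∀ p, 0 ≤ g p) : topdSum g ≤ ∑ p, g p := by
  obtain ⟨S, -, hS⟩ := Finset.exists_subset_card_eq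
    (show 2 ^ n ≤ (Finset.univ : Finset (PIdx n)).card from two_pow_le_card_pIdx)
  refine csSup_le ⟨_, S, hS, rfl⟩ ?_
  rintro _ ⟨T, -, rfl⟩
  exact Finset.sum_le_sum_of_subset_of_nonneg (Finset.subset_univ T) fun p _ _ => hg p

lemma sum_crossXi_sq_le_topdSum {ρ : Op n} (hρ : IsDensity ρ) (O : Op n) :
    ∑ p : PIdx n, crossXi ρ O p ^ 2 ≤ topdSum fun p => XiC O p ^ 2 := by
  obtain ⟨S, hcard, hS⟩ := exists_card_eq_sum_mul_le_sum (w := fun p => XiC ρ p ^ 2)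
    (a := fun p => XiC O p ^ 2) (Nat.two_pow_pos n) two_pow_le_card_pIdx
    (fun p => sq_nonneg _) (XiC_sq_le_one hρ) (by simpa [dim] using sum_XiC_sq_le_dim hρ)
    (fun p => sq_nonneg _)
  simp only [crossXi, mul_pow]
  exact hS.trans (le_topdSum _ hcard)

end ThriftyShadow

theorem cross_char_norm_chain_general (n : ℕ) (ρ O : Op n)
    (hρ : IsDensity ρ) (hO : O.IsHermitian) :
    |∑ p : PIdx n, twistXi ρ O p * crossXi ρ O p| ≤ ∑ p : PIdx n, (twistXi ρ O p) ^ 2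
    ∧ (∑ p : PIdx n, (twistXi ρ O p) ^ 2 = ∑ p : PIdx n, (crossXi ρ O p) ^ 2)
    ∧ (∑ p : PIdx n, (crossXi ρ O p) ^ 2 ≤ topdSum (fun p => (XiC O p) ^ 2))
    ∧ (topdSum (fun p => (XiC O p) ^ 2) ≤ ∑ p : PIdx n, (XiC O p) ^ 2)
    ∧ (∑ p : PIdx n, (XiC O p) ^ 2 = dim n * hsNormSq O) := by
  have hsq := sum_twistXi_sq hρ.1.1 hO
  refine ⟨?_, hsq, sum_crossXi_sq_le_topdSum hρ O, topdSum_le_sum fun p => sq_nonneg _,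
    sum_XiC_sq hO⟩
  refine abs_le_of_sq_le_sq ?_ (Finset.sum_nonneg fun p _ => sq_nonneg _)
  calc _ ≤ (∑ p, twistXi ρ O p ^ 2) * ∑ p, crossXi ρ O p ^ 2 :=
        Finset.sum_mul_sq_le_sq_mul_sq _ _ _
    _ = _ := by rw [← hsq, sq]

/-- norm chain for the (twisted) cross characteristic functions of a
state and a traceless observable. -/
theorem cross_char_norm_chain (n : ℕ) (ρ O : Op n)
    (hρ : IsDensity ρ) (hO : O.IsHermitian) (hO0 : O.trace = 0) :
    |∑ p : PIdx n, twistXi ρ O p * crossXi ρ O p| ≤ ∑ p : PIdx n, (twistXi ρ O p) ^ 2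
    ∧ (∑ p : PIdx n, (twistXi ρ O p) ^ 2 = ∑ p : PIdx n, (crossXi ρ O p) ^ 2)
    ∧ (∑ p : PIdx n, (crossXi ρ O p) ^ 2 ≤ topdSum (fun p => (XiC O p) ^ 2))
    ∧ (topdSum (fun p => (XiC O p) ^ 2) ≤ ∑ p : PIdx n, (XiC O p) ^ 2)
    ∧ (∑ p : PIdx n, (XiC O p) ^ 2 = dim n * hsNormSq O) :=
  cross_char_norm_chain_general n ρ O hρ hO
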